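/- arXiv:2109.13401 — 3 statements merged into one kernel-verified Lean document; each statement's English description precedes it below -/
import Mathlib

section
/- Let M be an n×n matrix with n ≥ 2. Then det(M) · det(M with rows 1,2 and columns 1,2 removed) = det(M with row 1, column 1 removed) · det(M with row 2, column 2 removed) − det(M with row 1, column 2 removed) · det(M with row 2, column 1 removed). -/
/-!
Jacobi's complementary-minor argument. For a block matrix `A` on `m ⊕ n`, multiplying `A` by
`[[adj(A)₁₁, 0], [adj(A)₂₁, 1]]` gives `[[det A • 1, A₁₂], [0, A₂₂]]`, since
`A * adj A = det A • 1`.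
Taking determinants, `det A * det adj(A)₁₁ = det A ^ |m| * det A₂₂`. For the generic matrix over
`ℤ[xᵢⱼ]` the factor `det A` is a nonzero element of a domain and can be cancelled, and the
cancelled identity specialises to every commutative ring. With `|m| = 2` the entries of `adj(A)₁₁`
are signed first minors, and the determinant of this `2 × 2` block is Dodgson's right-hand side.
-/

open Finset

/-- Determinant of the minor of the `ℕ`-indexed matrix `M` obtained by restricting to
rows `{0,...,n-1} \ I` and columns `{0,...,n-1} \ J` (in increasing order). -/
noncomputable def minorDet {R : Type*} [CommRing R] (M : Matrix ℕ ℕ R) (n : ℕ)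
    (I J : Finset ℕ) : R :=
  if h : (Finset.range n \ J).card = (Finset.range n \ I).card then
    Matrix.det (Matrix.of fun i j : Fin (Finset.range n \ I).card =>
      M (((Finset.range n \ I).orderIsoOfFin rfl i : ℕ))
        (((Finset.range n \ J).orderIsoOfFin h j : ℕ)))
  else 0

namespace Matrix

variable {R : Type*} [CommRing R] {m n : Type*} [Fintype m] [Fintype n] [DecidableEq m]
  [DecidableEq n]

theorem det_mul_det_adjugate_toBlocks₁₁ (A : Matrix (m ⊕ n) (m ⊕ n) R) :
    A.det * A.adjugate.toBlocks₁₁.det = A.det ^ Fintype.card m * A.toBlocks₂₂.det := by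
  have hblocks : A * fromBlocks A.adjugate.toBlocks₁₁ 0 A.adjugate.toBlocks₂₁ 1 =
      fromBlocks (A.det • 1) A.toBlocks₁₂ 0 A.toBlocks₂₂ := by
    have h := A.mul_adjugate
    set B := A.adjugate
    set d := A.det
    rw [← fromBlocks_toBlocks A, ← fromBlocks_toBlocks B, fromBlocks_multiply,
      ← fromBlocks_one, fromBlocks_smul, fromBlocks_inj] at h
    rw [← fromBlocks_toBlocks A, fromBlocks_multiply]
    simp [h.1, h.2.2.1]
  simpa [det_mul, det_fromBlocks_zero₁₂, det_fromBlocks_zero₂₁, det_smul] using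
    congr_arg det hblocks

theorem det_adjugate_toBlocks₁₁ [Nonempty m] (A : Matrix (m ⊕ n) (m ⊕ n) R) :
    A.adjugate.toBlocks₁₁.det = A.det ^ (Fintype.card m - 1) * A.toBlocks₂₂.det := by
  let X := mvPolynomialX (m ⊕ n) (m ⊕ n) ℤ
  suffices X.adjugate.toBlocks₁₁.det = X.det ^ (Fintype.card m - 1) * X.toBlocks₂₂.det by
    let f := MvPolynomial.eval₂Hom (Int.castRingHom R) fun p : (m ⊕ n) × (m ⊕ n) => A p.1 p.2
    have hX : f.mapMatrix X = A := mvPolynomialX_map_eval₂ _ A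
    have h := congr_arg f this
    rw [map_mul, map_pow, RingHom.map_det, RingHom.map_det, RingHom.map_det] at h
    rw [← hX, ← RingHom.map_adjugate]
    exact h
  apply mul_left_cancel₀ (det_mvPolynomialX_ne_zero (m ⊕ n) ℤ)
  rw [det_mul_det_adjugate_toBlocks₁₁, ← mul_assoc, ← pow_succ',
    Nat.sub_add_cancel Fintype.card_pos]

theorem det_mul_det_submatrix_addNat_two {k : ℕ} (A : Matrix (Fin (k + 2)) (Fin (k + 2)) R) :
    A.det * (A.submatrix (fun i : Fin k => i.addNat 2) fun j => j.addNat 2).det =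
      (A.submatrix Fin.succ Fin.succ).det *
          (A.submatrix (Fin.succAbove 1) (Fin.succAbove 1)).det -
        (A.submatrix Fin.succ (Fin.succAbove 1)).det *
          (A.submatrix (Fin.succAbove 1) Fin.succ).det := by
  let e : Fin 2 ⊕ Fin k ≃ Fin (k + 2) := finSumFinEquiv.trans (finCongr (Nat.add_comm 2 k))
  have he₀ : e (Sum.inl 0) = 0 := rfl
  have he₁ : e (Sum.inl 1) = 1 := Fin.ext (by simp [e])
  have h₂₂ : (A.submatrix e e).toBlocks₂₂ =
      A.submatrix (fun i : Fin k => i.addNat 2) fun j => j.addNat 2 := by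
    ext i j; simp [e, toBlocks₂₂]
  have h := det_adjugate_toBlocks₁₁ (A.submatrix e e)
  rw [h₂₂, adjugate_submatrix_equiv_self, det_submatrix_equiv_self, det_fin_two] at h
  simpa [toBlocks₁₁, he₀, he₁, adjugate_fin_succ_eq_det_submatrix, mul_comm] using h.symm

end Matrix

section minorDet

variable {R : Type*} [CommRing R] (M : Matrix ℕ ℕ R)

theorem minorDet_eq_det_submatrix {n k : ℕ} {I J : Finset ℕ}
    (hI : (range n \ I).card = k) (hJ : (range n \ J).card = k) {f g : Fin k → ℕ}
    (hf : StrictMono f) (hg : StrictMono g)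
    (hfI : ∀ i, f i ∈ range n \ I) (hgJ : ∀ j, g j ∈ range n \ J) :
    minorDet M n I J = (M.submatrix f g).det := by
  subst hI
  rw [minorDet, dif_pos hJ, orderEmbOfFin_unique rfl hfI hf, orderEmbOfFin_unique hJ hgJ hg]
  rfl

theorem minorDet_empty (n : ℕ) :
    minorDet M n ∅ ∅ = (M.submatrix (Fin.val : Fin n → ℕ) Fin.val).det :=
  minorDet_eq_det_submatrix M (by simp) (by simp) Fin.val_strictMono Fin.val_strictMono
    (by simp) (by simp)

theorem minorDet_singleton {n : ℕ} (a b : Fin (n + 1)) :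
    minorDet M (n + 1) {(a : ℕ)} {(b : ℕ)} =
      (M.submatrix (Fin.val ∘ a.succAbove) (Fin.val ∘ b.succAbove)).det := by
  have hcard (c : Fin (n + 1)) : (range (n + 1) \ {(c : ℕ)}).card = n := by
    simp [card_sdiff_of_subset, c.is_lt]
  have hmem (c : Fin (n + 1)) (i : Fin n) : (c.succAbove i : ℕ) ∈ range (n + 1) \ {(c : ℕ)} := by
    simpa [Fin.val_eq_val] using And.intro (c.succAbove i).is_lt (c.succAbove_ne i)
  exact minorDet_eq_det_submatrix M (hcard a) (hcard b)
    (Fin.val_strictMono.comp (Fin.strictMono_succAbove a))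
    (Fin.val_strictMono.comp (Fin.strictMono_succAbove b)) (hmem a) (hmem b)

theorem minorDet_zero_one {n : ℕ} :
    minorDet M (n + 2) {0, 1} {0, 1} =
      (M.submatrix (fun i : Fin n => (i.addNat 2 : ℕ)) fun j => (j.addNat 2 : ℕ)).det := by
  have hcard : (range (n + 2) \ {0, 1}).card = n := by
    simp [card_sdiff_of_subset, insert_subset_iff]
  have hmono : StrictMono fun i : Fin n => (i.addNat 2 : ℕ) := fun i j h => by simpa using h
  have hmem (i : Fin n) : (i.addNat 2 : ℕ) ∈ range (n + 2) \ {0, 1} := by simp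
  exact minorDet_eq_det_submatrix M hcard hcard hmono hmono hmem hmem

end minorDet

/-- **Dodgson's identity.** For an `n × n` matrix with `n ≥ 2`,
`det M · det M_{{1,2},{1,2}} = det M_{1,1} det M_{2,2} − det M_{1,2} det M_{2,1}`
(rows/columns `1,2` of the paper are indices `0,1` here). -/
theorem dodgson_identity {R : Type*} [CommRing R] (n : ℕ) (hn : 2 ≤ n)
    (M : Matrix ℕ ℕ R) :
    minorDet M n ∅ ∅ * minorDet M n {0, 1} {0, 1} =
      minorDet M n {0} {0} * minorDet M n {1} {1} -
        minorDet M n {0} {1} * minorDet M n {1} {0} := by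
  obtain ⟨k, rfl⟩ : ∃ k, n = k + 2 := ⟨n - 2, by omega⟩
  have h := (M.submatrix (Fin.val : Fin (k + 2) → ℕ) Fin.val).det_mul_det_submatrix_addNat_two
  simp only [Matrix.submatrix_submatrix] at h
  have h₀₀ := minorDet_singleton M (0 : Fin (k + 2)) 0
  have h₀₁ := minorDet_singleton M (0 : Fin (k + 2)) 1
  have h₁₀ := minorDet_singleton M (1 : Fin (k + 2)) 0
  have h₁₁ := minorDet_singleton M (1 : Fin (k + 2)) 1
  simp only [Fin.val_zero, Fin.val_one, Fin.succAbove_zero] at h₀₀ h₀₁ h₁₀ h₁₁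
  rw [minorDet_empty, minorDet_zero_one, h₀₀, h₀₁, h₁₀, h₁₁]
  exact h
end

section
/- Let L be the weighted Laplacian of the complete graph on n vertices (with symmetric edge variables), and let L_{r,c} denote L with row r and column c removed, where r, c are among the first m marked vertices. For fixed k = m−1 and fixed column index j, the spanning forest identity obtained by substituting L_{r,c} for M in the j-th column expansion identity does not depend on the choice of r: for any r, r' ∈ [k+1], the resulting identities of spanning forest polynomials (written as signed sums of A·B partition-pair monomials after cancellation) coincide. -/
open Finset

/-- The weighted Laplacian of the complete graph on vertices `{0,…,n−1}` with symmetric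
edge weights `a`: `L_{ii} = Σ_{l≠i} a_{il}` and `L_{ij} = −a_{ij}` for `i ≠ j`. -/
noncomputable def lap {R : Type*} [CommRing R] (a : ℕ → ℕ → R) (n : ℕ) :
    Matrix ℕ ℕ R :=
  fun i j => if i = j then ∑ l ∈ Finset.range n \ {i}, a i l else -(a i j)

/-- Skipping map: `skip t` enumerates `{0,1,2,…} ∖ {t}` in increasing order, so that
index `i` of the matrix with row (or column) `t` removed corresponds to original index
`skip t i`. -/
def skip (t i : ℕ) : ℕ := if i < t then i else i + 1

/-- The right-hand side `L_{r,c}(j)` of the spanning forest identity obtained by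
substituting the Laplacian minor `L_{r,c}` (row `r` and column `c` removed, with
`r, c < m = k + 1` marked vertices among `n` vertices) for `M` in the `j`-th column
expansion identity (`0 ≤ j < k = m − 1`):
`(−1)^{r+c} · Σ_{i<k} (−1)^{i+j} det(L_{{skip r i, r},{skip c j, c}})
  · det(L_{[m]∖{skip r i},[m]∖{skip c j}})`
(the factor `(−1)^{r+c}` normalises `det L_{r,c}` to the spanning tree polynomial, so
that the left-hand side of the identity is `Φ_{(1,…,1)} Φ_{(1,2,…,m)}`). -/
noncomputable def lapRHS {R : Type*} [CommRing R] (a : ℕ → ℕ → R) (n m r c j : ℕ) : R :=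
  (-1 : R) ^ (r + c) *
  ∑ i ∈ Finset.range (m - 1), (-1 : R) ^ (i + j) *
    (minorDet (lap a n) n {r, skip r i} {c, skip c j} *
      minorDet (lap a n) n (Finset.range m \ {skip r i}) (Finset.range m \ {skip c j}))

/-! Both sides equal `((-1)^r det L_{r,c}) · ((-1)^c det L_{[m],[m]})`. The minors of `L_{r,c}`
are minors of `L`, so the column expansion identity for `L_{r,c}` turns
`lapRHS` into this product, and since the columns of a Laplacian sum to zero the signed
cofactor `(-1)^r det L_{r,c}` does not depend on `r`.

The column expansion identity is proved with the adjugate, whose entries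
`adj(M)_{ji} = (-1)^{i+j} det M_{i,j}` are the coefficients of the expansion. Expanding the
complementary minor `b_i = det M_{{i} ∪ T, {j} ∪ T}` (`T` the indices `≥ k`) along its first
row gives `b_i = (M γ)_i` for a vector `γ` independent of `i`, with `γ_j = det M_{T,T}` and
`γ_s = 0` for the other `s < k`. Since `b_i = 0` for `i ∈ T` (a repeated row), the expansion
equals `(adj(M) M γ)_j = det M · γ_j`. -/

section Skip

lemma skip_strictMono (t : ℕ) : StrictMono (skip t) := fun _ _ _ => by
  unfold skip; split <;> split <;> omega

lemma skip_ne (t i : ℕ) : skip t i ≠ t := by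
  unfold skip; split <;> omega

lemma skip_lt {n t i : ℕ} (h : i < n - 1) : skip t i < n := by
  unfold skip; split <;> omega

lemma image_skip_range {t n : ℕ} (ht : t < n) :
    (range (n - 1)).image (skip t) = range n \ {t} := by
  ext z
  simp only [mem_image, mem_range, mem_sdiff, mem_singleton]
  constructor
  · rintro ⟨i, hi, rfl⟩
    exact ⟨skip_lt hi, skip_ne t i⟩
  · rintro ⟨hz, hzt⟩
    rcases lt_or_gt_of_ne hzt with h | h
    · exact ⟨z, by omega, by simp [skip, h]⟩
    · exact ⟨z - 1, by omega, by unfold skip; split <;> omega⟩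

lemma image_skip_range_sdiff {t n : ℕ} (ht : t < n) (I : Finset ℕ) :
    (range (n - 1) \ I).image (skip t) = range n \ insert t (I.image (skip t)) := by
  rw [image_sdiff _ _ (skip_strictMono t).injective, image_skip_range ht, sdiff_sdiff_left,
    insert_eq]
  rfl

lemma sum_range_eq_add_sum_skip {M : Type*} [AddCommMonoid M] (f : ℕ → M) {t n : ℕ}
    (ht : t < n) : ∑ p ∈ range n, f p = f t + ∑ p : Fin (n - 1), f (skip t p) := by
  rw [← add_sum_erase _ _ (mem_range.mpr ht), ← sdiff_singleton_eq_erase,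
    ← image_skip_range ht, sum_image fun a _ b _ h => (skip_strictMono t).injective h,
    sum_range]

lemma insert_image_skip_range {t m : ℕ} (ht : t < m) :
    insert t ((range (m - 1)).image (skip t)) = range m := by
  rw [image_skip_range ht, sdiff_singleton_eq_erase, insert_erase (mem_range.mpr ht)]

lemma insert_image_skip_range_sdiff {t m i : ℕ} (ht : t < m) :
    insert t ((range (m - 1) \ {i}).image (skip t)) = range m \ {skip t i} := by
  rw [image_sdiff _ _ (skip_strictMono t).injective, image_skip_range ht, image_singleton]
  have := skip_ne t i
  ext x
  simp only [mem_insert, mem_sdiff, mem_range, mem_singleton]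
  omega

lemma val_succAbove_eq_skip {n : ℕ} (i : Fin (n + 1)) (a : Fin n) :
    (i.succAbove a : ℕ) = skip i a := by
  rcases lt_or_ge (a : ℕ) i with h | h
  · rw [Fin.succAbove_of_castSucc_lt _ _ (Fin.lt_def.mpr h)]; simp [skip, h]
  · rw [Fin.succAbove_of_le_castSucc _ _ (Fin.le_def.mpr h)]; simp [skip, Nat.not_lt.mpr h]

end Skip

section MinorDet

variable {R : Type*} [CommRing R]

lemma minorDet_eq_det (M : Matrix ℕ ℕ R) (n : ℕ) (I J : Finset ℕ) {d : ℕ} (f g : Fin d → ℕ)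
    (hI : (range n \ I).card = d) (hJ : (range n \ J).card = d)
    (hf : StrictMono f) (hg : StrictMono g)
    (hfI : ∀ p, f p ∈ range n \ I) (hgJ : ∀ q, g q ∈ range n \ J) :
    minorDet M n I J = (Matrix.of fun p q => M (f p) (g q)).det := by
  have hd : (range n \ J).card = (range n \ I).card := hJ.trans hI.symm
  have hfe : (range n \ I).orderEmbOfFin rfl = fun p => f (finCongr hI p) :=
    (orderEmbOfFin_unique rfl (fun p => hfI _) fun _ _ h => hf h).symm
  have hge : (range n \ J).orderEmbOfFin hd = fun q => g (finCongr hI q) :=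
    (orderEmbOfFin_unique hd (fun q => hgJ _) fun _ _ h => hg h).symm
  rw [minorDet, dif_pos hd, ← Matrix.det_submatrix_equiv_self (finCongr hI)]
  congr 1
  ext p q
  simp only [coe_orderIsoOfFin_apply, hfe, hge, Matrix.of_apply, Matrix.submatrix_apply]

lemma minorDet_reindex (M : Matrix ℕ ℕ R) {φ ψ : ℕ → ℕ} (hφ : StrictMono φ) (hψ : StrictMono ψ)
    {n n' : ℕ} {I J I' J' : Finset ℕ} (hI : (range n' \ I).image φ = range n \ I')
    (hJ : (range n' \ J).image ψ = range n \ J') :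
    minorDet (Matrix.of fun p q => M (φ p) (ψ q)) n' I J = minorDet M n I' J' := by
  have hcI : (range n \ I').card = (range n' \ I).card := by
    rw [← hI, card_image_of_injective _ hφ.injective]
  have hcJ : (range n \ J').card = (range n' \ J).card := by
    rw [← hJ, card_image_of_injective _ hψ.injective]
  by_cases hd : (range n' \ J).card = (range n' \ I).card
  · rw [minorDet, dif_pos hd]
    have key := minorDet_eq_det M n I' J'
      (fun p => φ ((range n' \ I).orderEmbOfFin rfl p))
      (fun q => ψ ((range n' \ J).orderEmbOfFin hd q)) hcI (hcJ.trans hd)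
      (hφ.comp (orderEmbOfFin _ rfl).strictMono) (hψ.comp (orderEmbOfFin _ hd).strictMono)
      (fun p => hI ▸ mem_image_of_mem φ (orderEmbOfFin_mem _ rfl p))
      (fun q => hJ ▸ mem_image_of_mem ψ (orderEmbOfFin_mem _ hd q))
    simp only [key, coe_orderIsoOfFin_apply, Matrix.of_apply]
  · rw [minorDet, minorDet, dif_neg hd, dif_neg (by rwa [hcI, hcJ])]

lemma minorDet_skip (L : Matrix ℕ ℕ R) {n r c : ℕ} (hr : r < n) (hc : c < n) (I J : Finset ℕ) :
    minorDet (Matrix.of fun p q => L (skip r p) (skip c q)) (n - 1) I J =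
      minorDet L n (insert r (I.image (skip r))) (insert c (J.image (skip c))) :=
  minorDet_reindex L (skip_strictMono r) (skip_strictMono c) (image_skip_range_sdiff hr I)
    (image_skip_range_sdiff hc J)

lemma minorDet_empty_s10 (M : Matrix ℕ ℕ R) (n : ℕ) :
    minorDet M n ∅ ∅ = (Matrix.of fun p q : Fin n => M p q).det :=
  minorDet_eq_det M n ∅ ∅ _ _ (by simp) (by simp) Fin.val_strictMono Fin.val_strictMono
    (fun p => by simp) (fun q => by simp)

lemma minorDet_range (M : Matrix ℕ ℕ R) (n k : ℕ) :
    minorDet M n (range k) (range k) =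
      (Matrix.of fun p q : Fin (n - k) => M (k + p) (k + q)).det := by
  have hcard : (range n \ range k).card = n - k := by
    rw [card_sdiff, range_inter_range, card_range, card_range]; omega
  have hmono : StrictMono fun p : Fin (n - k) => k + (p : ℕ) := fun _ _ h => by simpa using h
  have hmem : ∀ p : Fin (n - k), k + (p : ℕ) ∈ range n \ range k := fun p => by
    simp only [mem_sdiff, mem_range]; omega
  exact minorDet_eq_det M n _ _ _ _ hcard hcard hmono hmono hmem hmem

lemma minorDet_singleton_s10 (M : Matrix ℕ ℕ R) {n i j : ℕ} (hi : i < n) (hj : j < n) :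
    minorDet M n {i} {j} =
      (Matrix.of fun p q : Fin (n - 1) => M (skip i p) (skip j q)).det := by
  have hcard : ∀ {t}, t < n → (range n \ {t}).card = n - 1 := fun ht => by
    rw [card_sdiff_of_subset (by simpa using ht)]; simp
  have hmem : ∀ t (p : Fin (n - 1)), skip t p ∈ range n \ {t} := fun t p => by
    simpa using ⟨skip_lt p.isLt, skip_ne t p⟩
  exact minorDet_eq_det M n _ _ _ _ (hcard hi) (hcard hj)
    ((skip_strictMono i).comp Fin.val_strictMono) ((skip_strictMono j).comp Fin.val_strictMono)
    (hmem i) (hmem j)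

lemma sum_cofactor_mul (M : Matrix ℕ ℕ R) (n : ℕ) {j s : ℕ} (hj : j < n + 1) (hs : s < n + 1) :
    ∑ i ∈ range (n + 1), (-1 : R) ^ (i + j) *
        (Matrix.of fun p q : Fin n => M (skip i p) (skip j q)).det * M i s =
      if j = s then (Matrix.of fun p q : Fin (n + 1) => M p q).det else 0 := by
  set A := Matrix.of fun p q : Fin (n + 1) => M p q
  have h := congrFun (congrFun (Matrix.adjugate_mul A) ⟨j, hj⟩) ⟨s, hs⟩
  simp only [Matrix.mul_apply, Matrix.smul_apply, Matrix.one_apply, Fin.mk.injEq, smul_eq_mul,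
    mul_ite, mul_one, mul_zero, Matrix.adjugate_fin_succ_eq_det_submatrix] at h
  rw [sum_range, ← h]
  refine sum_congr rfl fun i _ => ?_
  congr 3
  ext p q
  simp [A, val_succAbove_eq_skip]

def consTail (i k : ℕ) {l : ℕ} : Fin (l + 1) → ℕ := Fin.cons i fun p => k + p

@[simp] lemma consTail_zero (i k : ℕ) {l : ℕ} : consTail i k (0 : Fin (l + 1)) = i := rfl

@[simp] lemma consTail_succ (i k : ℕ) {l : ℕ} (p : Fin l) : consTail i k p.succ = k + p := rfl

lemma consTail_strictMono {i k l : ℕ} (hi : i < k) : StrictMono (consTail i k (l := l)) :=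
  Fin.strictMono_cons.mpr ⟨fun _ => by omega, fun _ _ h => by simpa using h⟩

lemma minorDet_range_sdiff_singleton (M : Matrix ℕ ℕ R) {n k i j : ℕ} (hi : i < k) (hj : j < k)
    (hk : k ≤ n) :
    minorDet M n (range k \ {i}) (range k \ {j}) =
      (Matrix.of fun p q : Fin (n - k + 1) => M (consTail i k p) (consTail j k q)).det := by
  have hcard : ∀ {t}, t < k → (range n \ (range k \ {t})).card = n - k + 1 := fun ht => by
    rw [card_sdiff_of_subset (sdiff_subset.trans (range_subset_range.mpr hk)),
      card_sdiff_of_subset (by simpa using ht)]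
    simp only [card_range, card_singleton]
    omega
  have hmem : ∀ {t}, t < k → ∀ p : Fin (n - k + 1), consTail t k p ∈ range n \ (range k \ {t}) :=
    fun ht p => by
      cases p using Fin.cases with
      | zero => simpa using lt_of_lt_of_le ht hk
      | succ p => simp only [consTail_succ, mem_sdiff, mem_range, mem_singleton]; omega
  exact minorDet_eq_det M n _ _ _ _ (hcard hi) (hcard hj) (consTail_strictMono hi)
    (consTail_strictMono hj) (hmem hi) (hmem hj)

lemma det_consTail_row_eq_sum (M : Matrix ℕ ℕ R) (i k : ℕ) {l : ℕ} (σ : Fin (l + 1) → ℕ) :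
    (Matrix.of fun p q : Fin (l + 1) => M (consTail i k p) (σ q)).det =
      ∑ q, M i (σ q) * ((-1) ^ (q : ℕ) *
        (Matrix.of fun p q' : Fin l => M (k + p) (σ (q.succAbove q'))).det) := by
  rw [Matrix.det_succ_row_zero]
  refine sum_congr rfl fun q _ => ?_
  simp only [Matrix.of_apply, consTail_zero, Matrix.submatrix, consTail_succ]
  ring

lemma det_consTail_row_eq_zero (M : Matrix ℕ ℕ R) {i k l : ℕ} (hki : k ≤ i) (hil : i < k + l)
    (σ : Fin (l + 1) → ℕ) :
    (Matrix.of fun p q : Fin (l + 1) => M (consTail i k p) (σ q)).det = 0 := by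
  refine Matrix.det_zero_of_row_eq (Fin.succ_ne_zero ⟨i - k, by omega⟩).symm ?_
  ext q
  simp only [Matrix.of_apply, consTail_zero, consTail_succ]
  congr 1
  omega

theorem minorDet_column_expansion (M : Matrix ℕ ℕ R) {N k j : ℕ} (hk : k ≤ N) (hj : j < k) :
    minorDet M N ∅ ∅ * minorDet M N (range k) (range k) =
      ∑ i ∈ range k, (-1 : R) ^ (i + j) *
        (minorDet M N {i} {j} * minorDet M N (range k \ {i}) (range k \ {j})) := by
  obtain ⟨n, rfl⟩ : ∃ n, N = n + 1 := ⟨N - 1, by omega⟩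
  set σ : Fin (n + 1 - k + 1) → ℕ := consTail j k
  set c : Fin (n + 1 - k + 1) → R := fun q => (-1) ^ (q : ℕ) *
    (Matrix.of fun p q' : Fin (n + 1 - k) => M (k + p) (σ (q.succAbove q'))).det
  have hσ : ∀ q, σ q < n + 1 := fun q => by
    cases q using Fin.cases with
    | zero => simp only [σ, consTail_zero]; omega
    | succ q => simp only [σ, consTail_succ]; omega
  have hσj : ∀ q, σ q = j → q = 0 := fun q hq => by
    cases q using Fin.cases with
    | zero => rfl
    | succ q => simp only [σ, consTail_succ] at hq; omega
  have hc0 : c 0 = minorDet M (n + 1) (range k) (range k) := by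
    simp [c, σ, minorDet_range]
  symm
  calc ∑ i ∈ range k, (-1 : R) ^ (i + j) *
        (minorDet M (n + 1) {i} {j} * minorDet M (n + 1) (range k \ {i}) (range k \ {j}))
      = ∑ i ∈ range (n + 1), (-1 : R) ^ (i + j) *
          (Matrix.of fun p q : Fin n => M (skip i p) (skip j q)).det *
          (Matrix.of fun p q : Fin (n + 1 - k + 1) => M (consTail i k p) (σ q)).det := by
        rw [← sum_subset (range_subset_range.mpr hk) fun i hi hik => by
          rw [det_consTail_row_eq_zero M (by simpa using hik) (by rw [mem_range] at hi; omega),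
            mul_zero]]
        refine sum_congr rfl fun i hi => ?_
        have hik : i < k := mem_range.mp hi
        rw [minorDet_singleton_s10 M (by omega) (by omega),
          minorDet_range_sdiff_singleton M hik hj hk, mul_assoc]
        rfl
    _ = ∑ q, (∑ i ∈ range (n + 1), (-1 : R) ^ (i + j) *
          (Matrix.of fun p q : Fin n => M (skip i p) (skip j q)).det * M i (σ q)) * c q := by
        simp only [det_consTail_row_eq_sum, mul_sum, sum_mul]
        rw [sum_comm]
        refine sum_congr rfl fun q _ => sum_congr rfl fun i _ => ?_
        ring
    _ = minorDet M (n + 1) ∅ ∅ * minorDet M (n + 1) (range k) (range k) := by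
        simp only [sum_cofactor_mul M n (by omega : j < n + 1) (hσ _), ite_mul, zero_mul]
        rw [sum_eq_single 0 (fun q _ hq => if_neg fun h => hq (hσj q h.symm)) (by simp),
          if_pos (by simp [σ]), hc0, minorDet_empty_s10]

lemma det_skip_succ_row (A : Matrix ℕ ℕ R) {n t : ℕ} (c : ℕ)
    (hsum : ∀ q < n, ∑ p ∈ range n, A p q = 0) (ht : t + 1 < n) :
    (Matrix.of fun p q : Fin (n - 1) => A (skip (t + 1) p) (skip c q)).det =
      -(Matrix.of fun p q : Fin (n - 1) => A (skip t p) (skip c q)).det := by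
  set B := Matrix.of fun p q : Fin (n - 1) => A (skip t p) (skip c q)
  have hrow : (fun q : Fin (n - 1) => A t (skip c q)) = ∑ p, (-1 : R) • B p := by
    ext q
    have h := hsum (skip c q) (skip_lt q.isLt)
    rw [sum_range_eq_add_sum_skip _ (by omega : t < n)] at h
    simp only [Finset.sum_apply, neg_one_smul, Pi.neg_apply, sum_neg_distrib, B, Matrix.of_apply]
    exact eq_neg_of_add_eq_zero_left h
  have hupd : Matrix.of (fun p q : Fin (n - 1) => A (skip (t + 1) p) (skip c q)) =
      B.updateRow ⟨t, by omega⟩ (fun q => A t (skip c q)) := by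
    ext p q
    rcases eq_or_ne p ⟨t, by omega⟩ with rfl | hp
    · simp [skip]
    · have hpt : (p : ℕ) ≠ t := fun h => hp (Fin.ext h)
      rw [Matrix.updateRow_ne hp]
      simp only [B, Matrix.of_apply]
      congr 1
      unfold skip; split_ifs <;> omega
  rw [hupd, hrow, Matrix.det_updateRow_sum, neg_one_smul]

lemma neg_one_pow_mul_minorDet_singleton_eq (A : Matrix ℕ ℕ R) {n c r r' : ℕ} (hc : c < n)
    (hsum : ∀ q < n, ∑ p ∈ range n, A p q = 0) (hr : r < n) (hr' : r' < n) :
    (-1) ^ r * minorDet A n {r} {c} = (-1) ^ r' * minorDet A n {r'} {c} := by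
  suffices h : ∀ t < n, (-1) ^ t * minorDet A n {t} {c} = minorDet A n {0} {c} by
    rw [h r hr, h r' hr']
  intro t
  induction t with
  | zero => simp
  | succ t ih =>
    intro ht
    rw [minorDet_singleton_s10 A ht hc, det_skip_succ_row A c hsum ht,
      ← minorDet_singleton_s10 A (by omega) hc, ← ih (by omega)]
    ring

lemma lapRHS_eq_mul (a : ℕ → ℕ → R) {n m t c j : ℕ} (hm : m ≤ n) (ht : t < m) (hc : c < m)
    (hj : j < m - 1) :
    lapRHS a n m t c j = ((-1) ^ t * minorDet (lap a n) n {t} {c}) *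
      ((-1) ^ c * minorDet (lap a n) n (range m) (range m)) := by
  have hskip := minorDet_skip (lap a n) (lt_of_lt_of_le ht hm) (lt_of_lt_of_le hc hm)
  have hexp := minorDet_column_expansion (Matrix.of fun p q => lap a n (skip t p) (skip c q))
    (Nat.sub_le_sub_right hm 1) hj
  simp only [hskip, image_empty, insert_empty, image_singleton, insert_image_skip_range ht,
    insert_image_skip_range hc, insert_image_skip_range_sdiff ht,
    insert_image_skip_range_sdiff hc] at hexp
  rw [lapRHS, ← hexp, pow_add]
  ring

lemma sum_lap_eq_zero (a : ℕ → ℕ → R) (hsym : ∀ i j, a i j = a j i) {n q : ℕ} (hq : q < n) :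
    ∑ p ∈ range n, lap a n p q = 0 := by
  rw [← add_sum_erase _ _ (mem_range.mpr hq), ← sdiff_singleton_eq_erase, ← sub_neg_eq_add,
    ← sum_neg_distrib, sub_eq_zero]
  simp only [lap, if_true]
  refine sum_congr rfl fun p hp => ?_
  rw [if_neg (by simpa using (mem_sdiff.mp hp).2), neg_neg, hsym]

end MinorDet

theorem row_removed_irrelevant_general {R : Type*} [CommRing R] (n m : ℕ) (hm : m ≤ n)
    (a : ℕ → ℕ → R) (hsym : ∀ i j, a i j = a j i)
    (r r' c j : ℕ) (hr : r < m) (hr' : r' < m) (hc : c < m) (hj : j < m - 1) :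
    lapRHS a n m r c j = lapRHS a n m r' c j := by
  rw [lapRHS_eq_mul a hm hr hc hj, lapRHS_eq_mul a hm hr' hc hj,
    neg_one_pow_mul_minorDet_singleton_eq (lap a n) (lt_of_lt_of_le hc hm)
      (fun q hq => sum_lap_eq_zero a hsym hq) (lt_of_lt_of_le hr hm) (lt_of_lt_of_le hr' hm)]

/-- **Lemma 2.8 ("the row removed does not matter").**  For the Laplacian of the
complete graph on `n` vertices with symmetric edge weights, with `m ≤ n` marked
vertices, the spanning forest identity obtained by substituting `L_{r,c}` into the
`j`-th column expansion identity is independent of the removed row `r`: its right-hand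
side coincides with the one for `L_{r',c}`, for any `r, r' < m`. -/
theorem row_removed_irrelevant {R : Type*} [CommRing R] (n m : ℕ) (hm : m ≤ n)
    (h2 : 2 ≤ m) (a : ℕ → ℕ → R) (hsym : ∀ i j, a i j = a j i)
    (r r' c j : ℕ) (hr : r < m) (hr' : r' < m) (hc : c < m) (hj : j < m - 1) :
    lapRHS a n m r c j = lapRHS a n m r' c j :=
  row_removed_irrelevant_general n m hm a hsym r r' c j hr hr' hc hj
end

section
/- For m = 4 marked vertices on any graph G, the three right-hand sides arising from the same block sum to the same expression; in particular L_{4,4}(1) + L_{4,4}(2) + L_{4,4}(3) = L_{4,3}(1) + L_{4,3}(2) + L_{4,3}(3) as sums of AB monomials, and each equals the sum of all 24 non-forbidden products A_iB_j (those with i,j such that the two vertices paired in A_i lie in different parts of B_j), each with coefficient 1. -/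
/-! Each right-hand side is the coefficient vector `mkAB l` of a list `l` of monomials, and
`mkAB` turns concatenation into addition. The two concatenated block lists are permutations of
each other, and they are duplicate-free with exactly the non-forbidden pairs as members; both
facts are finite checks. -/

open Finset

/-- The six 3-part set partitions of the four marked vertices, in the paper's indexing:
`A₁=(1,1,2,3)`, `A₂=(1,2,1,3)`, `A₃=(1,2,2,3)`, `A₄=(1,2,3,1)`, `A₅=(1,2,3,2)`,
`A₆=(1,2,3,3)`. -/
def Apart4 : Fin 6 → Fin 4 → Option ℕ :=
  ![![some 1, some 1, some 2, some 3],
    ![some 1, some 2, some 1, some 3],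
    ![some 1, some 2, some 2, some 3],
    ![some 1, some 2, some 3, some 1],
    ![some 1, some 2, some 3, some 2],
    ![some 1, some 2, some 3, some 3]]

/-- The seven 2-part set partitions of the four marked vertices, in the paper's indexing:
`B₁=(1,1,1,2)`, `B₂=(1,1,2,1)`, `B₃=(1,2,1,1)`, `B₄=(1,2,2,2)`, `B₅=(1,1,2,2)`,
`B₆=(1,2,1,2)`, `B₇=(1,2,2,1)`. -/
def Bpart4 : Fin 7 → Fin 4 → Option ℕ :=
  ![![some 1, some 1, some 1, some 2],
    ![some 1, some 1, some 2, some 1],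
    ![some 1, some 2, some 1, some 1],
    ![some 1, some 2, some 2, some 2],
    ![some 1, some 1, some 2, some 2],
    ![some 1, some 2, some 1, some 2],
    ![some 1, some 2, some 2, some 1]]

/-- The formal sum of `A_iB_j` monomials (an element of the vector space `V₄` with basis
the 42 monomials, recorded as its coefficient vector) determined by a list of index
pairs. -/
def mkAB (l : List (Fin 6 × Fin 7)) : Fin 6 × Fin 7 → ℚ := fun q => (l.count q : ℚ)

/-- `L_{4,4}(1) = A₄(B₁+B₄+B₅+B₆)+A₁(B₄+B₆)+A₂(B₄+B₅)` as a formal sum. -/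
def L441 : Fin 6 × Fin 7 → ℚ :=
  mkAB [(3,0),(3,3),(3,4),(3,5),(0,3),(0,5),(1,3),(1,4)]
/-- `L_{4,4}(2) = A₅(B₁+B₃+B₅+B₇)+A₁(B₃+B₇)+A₃(B₃+B₅)`. -/
def L442 : Fin 6 × Fin 7 → ℚ :=
  mkAB [(4,0),(4,2),(4,4),(4,6),(0,2),(0,6),(2,2),(2,4)]
/-- `L_{4,4}(3) = A₆(B₁+B₂+B₆+B₇)+A₂(B₂+B₇)+A₃(B₂+B₆)`. -/
def L443 : Fin 6 × Fin 7 → ℚ :=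
  mkAB [(5,0),(5,1),(5,5),(5,6),(1,1),(1,6),(2,1),(2,5)]
/-- `L_{4,3}(1) = A₂(B₂+B₄+B₅+B₇)+A₁(B₄+B₇)+A₄(B₄+B₅)`. -/
def L431 : Fin 6 × Fin 7 → ℚ :=
  mkAB [(1,1),(1,3),(1,4),(1,6),(0,3),(0,6),(3,3),(3,4)]
/-- `L_{4,3}(2) = A₃(B₂+B₃+B₅+B₆)+A₁(B₃+B₆)+A₅(B₃+B₅)`. -/
def L432 : Fin 6 × Fin 7 → ℚ :=
  mkAB [(2,1),(2,2),(2,4),(2,5),(0,2),(0,5),(4,2),(4,4)]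
/-- `L_{4,3}(3) = A₆(B₁+B₂+B₆+B₇)+A₄(B₁+B₆)+A₅(B₁+B₇)`. -/
def L433 : Fin 6 × Fin 7 → ℚ :=
  mkAB [(5,0),(5,1),(5,5),(5,6),(3,0),(3,5),(4,0),(4,6)]
/-- `L_{4,2}(1) = A₁(B₃+B₄+B₆+B₇)+A₂(B₄+B₇)+A₄(B₄+B₆)`. -/
def L421 : Fin 6 × Fin 7 → ℚ :=
  mkAB [(0,2),(0,3),(0,5),(0,6),(1,3),(1,6),(3,3),(3,5)]
/-- `L_{4,2}(2) = A₃(B₂+B₃+B₅+B₆)+A₂(B₂+B₅)+A₆(B₂+B₆)`. -/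
def L422 : Fin 6 × Fin 7 → ℚ :=
  mkAB [(2,1),(2,2),(2,4),(2,5),(1,1),(1,4),(5,1),(5,5)]
/-- `L_{4,1}(1) = A₁(B₃+B₄+B₆+B₇)+A₃(B₃+B₆)+A₅(B₃+B₇)`. -/
def L411 : Fin 6 × Fin 7 → ℚ :=
  mkAB [(0,2),(0,3),(0,5),(0,6),(2,2),(2,5),(4,2),(4,6)]
/-- `L_{4,1}(2) = A₂(B₂+B₄+B₅+B₇)+A₃(B₂+B₅)+A₆(B₂+B₇)`. -/
def L412 : Fin 6 × Fin 7 → ℚ :=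
  mkAB [(1,1),(1,3),(1,4),(1,6),(2,1),(2,4),(5,1),(5,6)]

/-- A pair `(A_i, B_j)` is *non-forbidden* if no two marked vertices lie in the same part
of both partitions. -/
def NonForbidden4 (i : Fin 6) (j : Fin 7) : Prop :=
  ∀ q q' : Fin 4, q ≠ q' → ¬(Apart4 i q = Apart4 i q' ∧ Bpart4 j q = Bpart4 j q')

instance (i : Fin 6) (j : Fin 7) : Decidable (NonForbidden4 i j) := by
  unfold NonForbidden4; infer_instance

theorem mkAB_append (l l' : List (Fin 6 × Fin 7)) : mkAB (l ++ l') = mkAB l + mkAB l' := by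
  funext q
  simp [mkAB, List.count_append]

theorem mkAB_eq_of_perm {l l' : List (Fin 6 × Fin 7)} (h : l.Perm l') : mkAB l = mkAB l' := by
  funext q
  simp [mkAB, h.count_eq]

theorem mkAB_eq_indicator_of_nodup {l : List (Fin 6 × Fin 7)} (hl : l.Nodup)
    {p : Fin 6 × Fin 7 → Prop} [DecidablePred p] (hp : ∀ q, q ∈ l ↔ p q) :
    mkAB l = fun q => if p q then 1 else 0 := by
  funext q
  by_cases hq : q ∈ l
  · simp [mkAB, List.count_eq_one_of_mem hl hq, (hp q).1 hq]
  · simp [mkAB, List.count_eq_zero_of_not_mem hq, mt (hp q).2 hq]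

/-- **Block sums agree** (`m = 4`): as formal sums of `A_iB_j` monomials,
`L_{4,4}(1)+L_{4,4}(2)+L_{4,4}(3) = L_{4,3}(1)+L_{4,3}(2)+L_{4,3}(3)`, and each equals
the sum of all 24 non-forbidden monomials `A_iB_j`, each with coefficient `1`. -/
theorem block_sums_agree :
    L441 + L442 + L443 = L431 + L432 + L433 ∧
      L441 + L442 + L443 = (fun q : Fin 6 × Fin 7 =>
        letI := Classical.dec (NonForbidden4 q.1 q.2)
        if NonForbidden4 q.1 q.2 then (1 : ℚ) else 0) := by
  show mkAB _ + mkAB _ + mkAB _ = mkAB _ + mkAB _ + mkAB _ ∧ mkAB _ + mkAB _ + mkAB _ = _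
  simp only [← mkAB_append]
  refine ⟨mkAB_eq_of_perm (by decide), ?_⟩
  refine (mkAB_eq_indicator_of_nodup (p := fun q => NonForbidden4 q.1 q.2) ?_ ?_).trans ?_
  · decide
  · decide
  · congr!
end
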